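/- Let ν = (439/18144)^{1/4}, s = 9ν²/2, and c₆ = 1/3 + (2/3)·√(s + 1/4) + 0.001 (so that 1/2 < c₆ < 1). Then there exists a constant c₇ > 0 such that for every integer N ≥ 1, 8N · ( ∑_{n≥N} (2/3)^n ∑_{r=1}^{⌊n/2⌋} C(n−r−1, r−1)·s^r + 7·∑_{n≥N−1} (2/3)^n ∑_{r=1}^{⌊n/2⌋} C(n−r−1, r−1)·s^r + 12·∑_{n≥N−2} (2/3)^n ∑_{r=1}^{⌊n/2⌋} C(n−r−1, r−1)·s^r ) ≤ c₇·N²·c₆^N. -/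

import Mathlib

/-- The paper's constant `s = 9ν²/2` with `ν = (439/18144)^{1/4}`. -/
noncomputable def sPaper : ℝ := 9 * ((439 / 18144 : ℝ) ^ ((1 : ℝ) / 4)) ^ 2 / 2

/-- The constant `c₆ = 1/3 + (2/3)√(s + 1/4) + 0.001`. -/
noncomputable def cSix : ℝ := 1 / 3 + 2 / 3 * Real.sqrt (sPaper + 1 / 4) + 0.001

/-- The total entropy–energy weight of dual lattice paths with `n` edges:
`(2/3)^n ∑_{r=1}^{⌊n/2⌋} C(n−r−1, r−1) s^r`. -/
noncomputable def pathWeight (n : ℕ) : ℝ :=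
  (2 / 3 : ℝ) ^ n *
    ∑ r ∈ Finset.Icc 1 (n / 2), (Nat.choose (n - r - 1) (r - 1) : ℝ) * sPaper ^ r

/-- The tail sum `∑_{n ≥ M} (2/3)^n ∑_{r=1}^{⌊n/2⌋} C(n−r−1, r−1) s^r`. -/
noncomputable def tailWeight (M : ℕ) : ℝ := ∑' k : ℕ, pathWeight (M + k)

/-!
Let `λ = 1/2 + √(s + 1/4)` be the larger root of `λ² = λ + s` (numerically `s ≈ 0.70`,
`λ ≈ 1.47`). Since `s = λ(λ - 1)`, the binomial theorem gives
`C(n-r-1, r-1) s^r ≤ s λ^(n-2)`, so the `⌊n/2⌋` terms of a path weight add up to at most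
`n q^n` with `q = 2λ/3 < 1`. Summing `n q^n` over `n ≥ M` leaves a tail `O((M + 1) q^M)`;
the three tails start within two of `N` and `q ≤ c₆`, so the left-hand side is
`O(N · N · c₆^N)`.
-/

theorem Nat.cast_choose_mul_pow_le_add_one_pow {R : Type*} [CommSemiring R] [PartialOrder R]
    [IsOrderedRing R] (m k : ℕ) {x : R} (hx : 0 ≤ x) :
    (m.choose k : R) * x ^ k ≤ (x + 1) ^ m := by
  rcases lt_or_ge m k with hmk | hkm
  · simpa [Nat.choose_eq_zero_of_lt hmk] using pow_nonneg (add_nonneg hx zero_le_one) m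
  rw [add_pow]
  calc (m.choose k : R) * x ^ k = x ^ k * 1 ^ (m - k) * m.choose k := by simp [mul_comm]
    _ ≤ ∑ i ∈ Finset.range (m + 1), x ^ i * 1 ^ (m - i) * m.choose i :=
      Finset.single_le_sum (f := fun i => x ^ i * 1 ^ (m - i) * (m.choose i : R))
        (fun i _ => by simpa using mul_nonneg (pow_nonneg hx i) (Nat.cast_nonneg _))
        (Finset.mem_range.2 (Nat.lt_succ_of_le hkm))

section PathCount

variable {L s : ℝ}

-- `s = L (L - 1)`, so `C(m, k) (L - 1)^k ≤ L^m` absorbs the binomial coefficient.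
theorem choose_mul_pow_le_of_sq_eq (hL : 1 ≤ L) (hLs : L ^ 2 = L + s) {n r : ℕ}
    (hr : 1 ≤ r) (hrn : 2 * r ≤ n) :
    ((n - r - 1).choose (r - 1) : ℝ) * s ^ r ≤ s * L ^ (n - 2) := by
  have hs : s = L * (L - 1) := by linear_combination -hLs
  have hs0 : 0 ≤ s := by rw [hs]; nlinarith
  have hchoose := Nat.cast_choose_mul_pow_le_add_one_pow (n - r - 1) (r - 1)
    (sub_nonneg.2 hL)
  rw [sub_add_cancel] at hchoose
  calc ((n - r - 1).choose (r - 1) : ℝ) * s ^ r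
      = s * L ^ (r - 1) * (((n - r - 1).choose (r - 1) : ℝ) * (L - 1) ^ (r - 1)) := by
        rw [← Nat.sub_add_cancel hr, pow_succ', Nat.add_sub_cancel]
        nth_rw 2 [hs]; rw [mul_pow]; ring
    _ ≤ s * L ^ (r - 1) * L ^ (n - r - 1) := by gcongr
    _ = s * L ^ (n - 2) := by rw [mul_assoc, ← pow_add]; congr 2; omega

theorem sum_choose_mul_pow_le_of_sq_eq (hL : 1 ≤ L) (hLs : L ^ 2 = L + s) (n : ℕ) :
    ∑ r ∈ Finset.Icc 1 (n / 2), ((n - r - 1).choose (r - 1) : ℝ) * s ^ r ≤ n * L ^ n := by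
  have hterm : ∀ r ∈ Finset.Icc 1 (n / 2),
      ((n - r - 1).choose (r - 1) : ℝ) * s ^ r ≤ s * L ^ (n - 2) := fun r hr =>
    choose_mul_pow_le_of_sq_eq hL hLs (Finset.mem_Icc.1 hr).1
      (by have := (Finset.mem_Icc.1 hr).2; omega)
  refine (Finset.sum_le_card_nsmul _ _ _ hterm).trans ?_
  rw [Nat.card_Icc, Nat.add_sub_cancel, nsmul_eq_mul]
  rcases lt_or_ge n 2 with hn | hn
  · simp [Nat.div_eq_of_lt hn]; positivity
  have hsL : s * L ^ (n - 2) ≤ L ^ n := by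
    obtain ⟨m, rfl⟩ := Nat.exists_eq_add_of_le' hn
    rw [Nat.add_sub_cancel, pow_add, hLs]
    nlinarith [pow_nonneg (zero_le_one.trans hL) m]
  have hs0 : 0 ≤ s := by nlinarith
  exact mul_le_mul (Nat.cast_le.2 (Nat.div_le_self n 2)) hsL
    (mul_nonneg hs0 (pow_nonneg (by linarith) _)) n.cast_nonneg

end PathCount

theorem tsum_shift_le_of_le_coe_mul_geometric {f : ℕ → ℝ} {q : ℝ} (hf0 : ∀ n, 0 ≤ f n)
    (hfq : ∀ n, f n ≤ n * q ^ n) (hq0 : 0 ≤ q) (hq1 : q < 1) (M : ℕ) :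
    ∑' k, f (M + k) ≤ (M + 1) * q ^ M / (1 - q) ^ 2 := by
  have hmajorant : HasSum (fun k : ℕ => ((M + k : ℕ) : ℝ) * q ^ (M + k))
      (q ^ M * (M * (1 - q)⁻¹ + q / (1 - q) ^ 2)) := by
    have h := ((hasSum_geometric_of_lt_one hq0 hq1).mul_left (M : ℝ)).add
      (hasSum_coe_mul_geometric_of_norm_lt_one (by rwa [Real.norm_of_nonneg hq0]))
    exact (h.mul_left (q ^ M)).congr_fun fun k => by push_cast; ring
  have hle : ∀ k, f (M + k) ≤ ((M + k : ℕ) : ℝ) * q ^ (M + k) := fun k => hfq _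
  have hsum : Summable (fun k => f (M + k)) :=
    .of_nonneg_of_le (fun k => hf0 _) hle hmajorant.summable
  have h1q : 0 < 1 - q := by linarith
  calc ∑' k, f (M + k) ≤ q ^ M * (M * (1 - q)⁻¹ + q / (1 - q) ^ 2) :=
        hasSum_le hle hsum.hasSum hmajorant
    _ ≤ (M + 1) * q ^ M / (1 - q) ^ 2 := by
        rw [le_div_iff₀ (by positivity)]
        field_simp
        nlinarith [pow_nonneg hq0 M, mul_nonneg (pow_nonneg hq0 M) M.cast_nonneg]

noncomputable def growthRate : ℝ := 1 / 2 + √(sPaper + 1 / 4)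

theorem sPaper_pos : 0 < sPaper := by
  have : 0 < (439 / 18144 : ℝ) ^ ((1 : ℝ) / 4) := Real.rpow_pos_of_pos (by norm_num) _
  unfold sPaper; positivity

theorem sPaper_sq : sPaper ^ 2 = 35559 / 72576 := by
  have h : (((439 / 18144 : ℝ) ^ ((1 : ℝ) / 4)) ^ 2) ^ 2 = 439 / 18144 := by
    rw [← pow_mul, ← Real.rpow_mul_natCast (by norm_num)]; norm_num
  unfold sPaper; rw [div_pow, mul_pow, h]; norm_num

theorem sPaper_lt : sPaper < 3 / 4 := by nlinarith [sPaper_sq, sPaper_pos]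

theorem growthRate_sq : growthRate ^ 2 = growthRate + sPaper := by
  have := Real.sq_sqrt (by linarith [sPaper_pos] : 0 ≤ sPaper + 1 / 4)
  unfold growthRate; linear_combination this

theorem one_le_growthRate : 1 ≤ growthRate := by
  have : 1 / 2 ≤ √(sPaper + 1 / 4) := Real.le_sqrt_of_sq_le (by linarith [sPaper_pos])
  unfold growthRate; linarith

theorem growthRate_lt : growthRate < 3 / 2 := by
  have : √(sPaper + 1 / 4) < 1 := (Real.sqrt_lt' one_pos).2 (by linarith [sPaper_lt])
  unfold growthRate; linarith

theorem pathWeight_nonneg (n : ℕ) : 0 ≤ pathWeight n := by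
  have := sPaper_pos
  unfold pathWeight; positivity

noncomputable def decayRate : ℝ := 2 / 3 * growthRate

theorem decayRate_pos : 0 < decayRate := by unfold decayRate; linarith [one_le_growthRate]

theorem decayRate_lt_one : decayRate < 1 := by unfold decayRate; linarith [growthRate_lt]

theorem decayRate_le_cSix : decayRate ≤ cSix := by unfold decayRate growthRate cSix; linarith

theorem pathWeight_le (n : ℕ) : pathWeight n ≤ n * decayRate ^ n := by
  calc pathWeight n ≤ (2 / 3 : ℝ) ^ n * (n * growthRate ^ n) := by
        unfold pathWeight; gcongr
        exact sum_choose_mul_pow_le_of_sq_eq one_le_growthRate growthRate_sq n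
    _ = n * decayRate ^ n := by rw [decayRate, mul_pow]; ring

theorem tailWeight_le (M : ℕ) :
    tailWeight M ≤ (M + 1) * decayRate ^ M / (1 - decayRate) ^ 2 :=
  tsum_shift_le_of_le_coe_mul_geometric pathWeight_nonneg pathWeight_le decayRate_pos.le
    decayRate_lt_one M

theorem tailWeight_le_mul_cSix_pow {M N : ℕ} (hN : 1 ≤ N) (hNM : N ≤ M + 2) (hMN : M ≤ N) :
    tailWeight M ≤ 2 / (decayRate * (1 - decayRate)) ^ 2 * N * cSix ^ N := by
  have hq0 := decayRate_pos
  have hq1 : 0 < 1 - decayRate := sub_pos.2 decayRate_lt_one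
  have hpow : decayRate ^ M * decayRate ^ 2 ≤ cSix ^ N := by
    rw [← pow_add]
    exact (pow_le_pow_of_le_one hq0.le decayRate_lt_one.le hNM).trans
      (pow_le_pow_left₀ hq0.le decayRate_le_cSix N)
  have hcount : (M + 1 : ℝ) ≤ 2 * N := by norm_cast; omega
  calc tailWeight M ≤ (M + 1) * decayRate ^ M / (1 - decayRate) ^ 2 := tailWeight_le M
    _ = (M + 1) * (decayRate ^ M * decayRate ^ 2) / (decayRate * (1 - decayRate)) ^ 2 := by
        field_simp
    _ ≤ 2 * N * cSix ^ N / (decayRate * (1 - decayRate)) ^ 2 := by gcongr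
    _ = 2 / (decayRate * (1 - decayRate)) ^ 2 * N * cSix ^ N := by ring

/-- Quantitative conclusion of the triggering lemma at `ρ₃ = t = 1`:
`8N (T_N + 7 T_{N−1} + 12 T_{N−2}) ≤ c₇ N² c₆^N`, where `T_M` is the tail sum of path
weights starting at `max(M,1)`. -/
theorem stmt_16 :
    ∃ c₇ : ℝ, 0 < c₇ ∧ ∀ N : ℕ, 1 ≤ N →
      8 * (N : ℝ) *
          (tailWeight N + 7 * tailWeight (max (N - 1) 1) + 12 * tailWeight (max (N - 2) 1)) ≤
        c₇ * (N : ℝ) ^ 2 * cSix ^ N := by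
  set K := 2 / (decayRate * (1 - decayRate)) ^ 2
  have hK : 0 < K := by
    have := decayRate_pos
    have := sub_pos.2 decayRate_lt_one
    positivity
  refine ⟨160 * K, by positivity, fun N hN => ?_⟩
  have h₀ := tailWeight_le_mul_cSix_pow (M := N) hN (by omega) le_rfl
  have h₁ := tailWeight_le_mul_cSix_pow (M := max (N - 1) 1) hN (by omega) (by omega)
  have h₂ := tailWeight_le_mul_cSix_pow (M := max (N - 2) 1) hN (by omega) (by omega)
  calc 8 * (N : ℝ) *
        (tailWeight N + 7 * tailWeight (max (N - 1) 1) + 12 * tailWeight (max (N - 2) 1))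
      ≤ 8 * N * (20 * (K * N * cSix ^ N)) := by gcongr; linarith
    _ = 160 * K * (N : ℝ) ^ 2 * cSix ^ N := by ring
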